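/- Möbius function of the pruning poset: for a finite rooted tree T = (γ, V, E) and subsets H, K ⊆ E with H ≼_P K, the Möbius function of the pruning poset satisfies μ(H, K) = (−1)^{|H|−|K|} if H \ K is a stump cut set of the stump tree T_γ(K) (equivalently, an antichain in the edge order of T_γ(K)), and μ(H, K) = 0 otherwise. -/

import Mathlib

open scoped Classical

/-- A finite rooted tree, encoded by its tree partial order on the vertex set `V`:
the root is the bottom element `⊥`, and any two ancestors of a common vertex are
comparable. -/
def TreeOrder (V : Type*) [PartialOrder V] [OrderBot V] : Prop :=
  ∀ a b c : V, b ≤ a → c ≤ a → (b ≤ c ∨ c ≤ b)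

/-- Edges of the rooted tree, identified with their upper ends (the non-root vertices).
The induced partial order on edges is the subtype order. -/
abbrev Edge (V : Type*) [PartialOrder V] [OrderBot V] := {v : V // v ≠ ⊥}

variable {V : Type*} [Fintype V] [DecidableEq V] [PartialOrder V] [OrderBot V]

/-- The stump set `V_γ(H)`: the vertex set of the connected component of the root
in the forest `T − H`. -/
def stump (H : Finset (Edge V)) : Set V :=
  {v | ∀ e ∈ H, ¬ (e.val ≤ v)}

/-- The pruning order: `H ≼_P K` iff `H = K ∪ A` for some set `A` of edges of the
stump tree of `T − K`. -/
def pleP (H K : Finset (Edge V)) : Prop :=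
  ∃ A : Finset (Edge V), (∀ e ∈ A, e.val ∈ stump K) ∧ H = K ∪ A

lemma pleP_iff' (H K : Finset (Edge V)) :
    pleP H K ↔ K ⊆ H ∧ ∀ e ∈ H \ K, e.val ∈ stump K := by
  constructor
  · rintro ⟨A, hA, rfl⟩
    refine ⟨Finset.subset_union_left, fun e he => ?_⟩
    have h := Finset.mem_sdiff.1 he
    rcases Finset.mem_union.1 h.1 with h' | h'
    · exact absurd h' h.2
    · exact hA e h'
  · rintro ⟨hKH, hst⟩
    exact ⟨H \ K, hst, (Finset.union_sdiff_of_subset hKH).symm⟩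

/-- the Möbius function of the pruning poset.  If `μ` satisfies the
defining recursion of the Möbius function of the pruning poset (`μ(H,H) = 1` and
`∑_{H ≼_P z ≼_P K} μ(H,z) = 0` for `H ≺_P K`), then for all `H ≼_P K` one has
`μ(H,K) = (−1)^{|H|−|K|}` if `H \ K` is a stump cut set of the stump tree `T_γ(K)`
(equivalently, an antichain of edges — it is automatically contained in `E_γ(K)`),
and `μ(H,K) = 0` otherwise. -/
theorem mobius_pruning (hT : TreeOrder V) (μ : Finset (Edge V) → Finset (Edge V) → ℤ)
    (hrefl : ∀ H : Finset (Edge V), μ H H = 1)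
    (hrec : ∀ H K : Finset (Edge V), pleP H K → H ≠ K →
      (∑ z : Finset (Edge V), if pleP H z ∧ pleP z K then μ H z else 0) = 0) :
    ∀ H K : Finset (Edge V), pleP H K →
      μ H K = if IsAntichain (· ≤ ·) ((H \ K : Finset (Edge V)) : Set (Edge V)) then
          (-1 : ℤ) ^ (H.card - K.card) else 0 := by
  classical
  have stump_mem : ∀ (K : Finset (Edge V)) (v : V), v ∈ stump K ↔ ∀ e ∈ K, ¬ (e.val ≤ v) :=
    fun K v => Iff.rfl
  suffices h : ∀ n (H K : Finset (Edge V)), pleP H K → (H \ K).card = n →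
      μ H K = if IsAntichain (· ≤ ·) ((H \ K : Finset (Edge V)) : Set (Edge V)) then
          (-1 : ℤ) ^ (H.card - K.card) else 0 from
    fun H K hHK => h _ H K hHK rfl
  intro n
  induction n using Nat.strong_induction_on with
  | _ n IH =>
  intro H K hHK hn
  obtain ⟨hKH, hstump⟩ := (pleP_iff' H K).1 hHK
  have hcardHK : H.card - K.card = (H \ K).card := (Finset.card_sdiff_of_subset hKH).symm
  rcases Nat.eq_zero_or_pos n with hn0 | hnpos
  · subst hn0
    have hHK0 : H \ K = ∅ := Finset.card_eq_zero.1 hn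
    have hEq : H = K := Finset.Subset.antisymm (Finset.sdiff_eq_empty_iff_subset.1 hHK0) hKH
    subst hEq
    rw [hrefl]
    have hanti : IsAntichain ((· ≤ ·) : Edge V → Edge V → Prop) (∅ : Set (Edge V)) :=
      fun a ha => absurd ha (Set.notMem_empty a)
    simp [hHK0, Finset.coe_empty, hanti]
  · set A := H \ K with hA
    have hAne : A.Nonempty := Finset.card_pos.1 (hn ▸ hnpos)
    have hAH : A ⊆ H := Finset.sdiff_subset
    have hHA : H \ A = K := by
      rw [hA, Finset.sdiff_sdiff_eq_self hKH]
    set S : Finset (Finset (Edge V)) :=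
      A.powerset.filter (fun D => ∀ a ∈ D, ∀ b ∈ A \ D, ¬ (b.val ≤ a.val)) with hS
    have hmemS : ∀ D, D ∈ S ↔ D ⊆ A ∧ ∀ a ∈ D, ∀ b ∈ A \ D, ¬ (b.val ≤ a.val) := by
      intro D
      simp [hS, Finset.mem_powerset, Finset.mem_filter]
    have hplePD : ∀ D ∈ S, pleP H (H \ D) ∧ pleP (H \ D) K := by
      intro D hD
      obtain ⟨hDA, hDC⟩ := (hmemS D).1 hD
      have hDH : D ⊆ H := hDA.trans hAH
      have hHD : H \ (H \ D) = D := Finset.sdiff_sdiff_eq_self hDH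
      constructor
      · refine (pleP_iff' _ _).2 ⟨Finset.sdiff_subset, ?_⟩
        rw [hHD]
        intro a ha
        rw [stump_mem]
        intro b hb
        have hbH := (Finset.mem_sdiff.1 hb).1
        have hbD := (Finset.mem_sdiff.1 hb).2
        by_cases hbK : b ∈ K
        · exact (stump_mem K a.val).1 (hstump a (hDA ha)) b hbK
        · exact hDC a ha b (Finset.mem_sdiff.2 ⟨Finset.mem_sdiff.2 ⟨hbH, hbK⟩, hbD⟩)
      · refine (pleP_iff' _ _).2 ⟨?_, ?_⟩
        · intro k hk
          refine Finset.mem_sdiff.2 ⟨hKH hk, fun hkD => ?_⟩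
          exact (Finset.mem_sdiff.1 (hDA hkD)).2 hk
        · intro e he
          have he' : e ∈ A := Finset.mem_sdiff.2
            ⟨(Finset.mem_sdiff.1 (Finset.mem_sdiff.1 he).1).1, (Finset.mem_sdiff.1 he).2⟩
          exact hstump e he'
    have hcharF : ∀ z, pleP H z → pleP z K → z ∈ S.image (fun D => H \ D) := by
      intro z hz1 hz2
      obtain ⟨hzH, hz1'⟩ := (pleP_iff' H z).1 hz1
      obtain ⟨hKz, _⟩ := (pleP_iff' z K).1 hz2
      refine Finset.mem_image.2 ⟨H \ z, ?_, (Finset.sdiff_sdiff_eq_self hzH)⟩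
      refine (hmemS _).2 ⟨?_, ?_⟩
      · intro e he
        have h := Finset.mem_sdiff.1 he
        exact Finset.mem_sdiff.2 ⟨h.1, fun hk => h.2 (hKz hk)⟩
      · intro a ha b hb
        have hbz : b ∈ z := by
          have hb' := Finset.mem_sdiff.1 hb
          have hbH : b ∈ H := hAH hb'.1
          by_contra hbz
          exact hb'.2 (Finset.mem_sdiff.2 ⟨hbH, hbz⟩)
        exact (stump_mem z a.val).1 (hz1' a ha) b hbz
    have hfilter : Finset.univ.filter (fun z => pleP H z ∧ pleP z K)
        = S.image (fun D => H \ D) := by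
      ext z
      simp only [Finset.mem_filter, Finset.mem_univ, true_and]
      constructor
      · rintro ⟨h1, h2⟩
        exact hcharF z h1 h2
      · intro hz
        obtain ⟨D, hD, rfl⟩ := Finset.mem_image.1 hz
        exact hplePD D hD
    have hinj : ∀ D1 ∈ S, ∀ D2 ∈ S, H \ D1 = H \ D2 → D1 = D2 := by
      intro D1 h1 D2 h2 h
      have e1 := Finset.sdiff_sdiff_eq_self (((hmemS D1).1 h1).1.trans hAH)
      have e2 := Finset.sdiff_sdiff_eq_self (((hmemS D2).1 h2).1.trans hAH)
      rw [← e1, ← e2, h]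
    have hne : H ≠ K := by
      intro hEq
      have h0 : A.card = 0 := by rw [hA, hEq, Finset.sdiff_self, Finset.card_empty]
      omega
    have hsum0 := hrec H K hHK hne
    rw [← Finset.sum_filter, hfilter, Finset.sum_image hinj] at hsum0
    have hval : ∀ D ∈ S, D ≠ A → μ H (H \ D)
        = if IsAntichain (· ≤ ·) (D : Set (Edge V)) then (-1 : ℤ) ^ D.card else 0 := by
      intro D hD hDA'
      have hDA := ((hmemS D).1 hD).1
      have hDH : D ⊆ H := hDA.trans hAH
      have hHD : H \ (H \ D) = D := Finset.sdiff_sdiff_eq_self hDH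
      have hlt : D.card < n := by
        rw [← hn]
        exact Finset.card_lt_card (Finset.ssubset_iff_subset_ne.2 ⟨hDA, hDA'⟩)
      have hIH := IH D.card hlt H (H \ D) (hplePD D hD).1 (by rw [hHD])
      rw [hIH, hHD]
      have hc1 : (H \ D).card = H.card - D.card := Finset.card_sdiff_of_subset hDH
      have hc2 : D.card ≤ H.card := Finset.card_le_card hDH
      have hc : H.card - (H \ D).card = D.card := by omega
      rw [hc]
    have hAS : A ∈ S := (hmemS A).2 ⟨Finset.Subset.refl _, by
      intro a ha b hb
      simp at hb⟩
    set M : Finset (Edge V) := A.filter (fun a => ∀ b ∈ A, ¬ b < a) with hM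
    have hMne : M.Nonempty := by
      obtain ⟨m, hm, hmin⟩ := A.exists_minimal hAne
      exact ⟨m, Finset.mem_filter.2 ⟨hm, fun b hb hbm => hbm.not_ge (hmin hb hbm.le)⟩⟩
    have hSfilter : S.filter (fun D : Finset (Edge V) => IsAntichain (· ≤ ·) ((D : Finset (Edge V)) : Set (Edge V)))
        = M.powerset := by
      ext D
      simp only [Finset.mem_filter, Finset.mem_powerset]
      constructor
      · rintro ⟨hDS, hanti⟩
        obtain ⟨hDA, hDC⟩ := (hmemS D).1 hDS
        intro d hd
        refine Finset.mem_filter.2 ⟨hDA hd, fun b hb hbd => ?_⟩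
        have hbD : b ∈ D := by
          by_contra hbD
          exact hDC d hd b (Finset.mem_sdiff.2 ⟨hb, hbD⟩) (le_of_lt hbd)
        exact hanti (Finset.mem_coe.2 hbD) (Finset.mem_coe.2 hd) (ne_of_lt hbd) (le_of_lt hbd)
      · intro hDM
        have hDA : D ⊆ A := hDM.trans (Finset.filter_subset _ _)
        refine ⟨(hmemS D).2 ⟨hDA, ?_⟩, ?_⟩
        · intro a ha b hb hba
          obtain ⟨hbA, hbD⟩ := Finset.mem_sdiff.1 hb
          have hamin := (Finset.mem_filter.1 (hDM ha)).2
          have hba' : b ≤ a := hba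
          rcases lt_or_eq_of_le hba' with hlt | heq
          · exact hamin b hbA hlt
          · exact hbD (by rw [heq]; exact ha)
        · intro a haD b hbD hab hle
          have hbmin := (Finset.mem_filter.1 (hDM (Finset.mem_coe.1 hbD))).2
          exact hbmin a (hDA (Finset.mem_coe.1 haD)) (lt_of_le_of_ne hle hab)
    have hsumS : ∑ D ∈ S,
        (if IsAntichain (· ≤ ·) (D : Set (Edge V)) then (-1 : ℤ) ^ D.card else 0) = 0 := by
      rw [← Finset.sum_filter, hSfilter]
      exact Finset.sum_powerset_neg_one_pow_card_of_nonempty hMne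
    have e1 : ∑ D ∈ S.erase A, μ H (H \ D) + μ H K = 0 := by
      have h := Finset.sum_erase_add S (fun D => μ H (H \ D)) hAS
      rw [hsum0] at h
      simpa [hHA] using h
    have e2 : (∑ D ∈ S.erase A,
          if IsAntichain (· ≤ ·) (D : Set (Edge V)) then (-1 : ℤ) ^ D.card else 0)
        + (if IsAntichain (· ≤ ·) (A : Set (Edge V)) then (-1 : ℤ) ^ A.card else 0) = 0 := by
      have h := Finset.sum_erase_add S
        (fun D => if IsAntichain (· ≤ ·) (D : Set (Edge V)) then (-1 : ℤ) ^ D.card else 0) hAS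
      rw [hsumS] at h
      simpa using h
    have herase : ∑ D ∈ S.erase A, μ H (H \ D)
        = ∑ D ∈ S.erase A,
          (if IsAntichain (· ≤ ·) (D : Set (Edge V)) then (-1 : ℤ) ^ D.card else 0) := by
      refine Finset.sum_congr rfl fun D hD => ?_
      exact hval D (Finset.mem_of_mem_erase hD) (Finset.ne_of_mem_erase hD)
    have hfin : μ H K
        = if IsAntichain (· ≤ ·) (A : Set (Edge V)) then (-1 : ℤ) ^ A.card else 0 := by
      linarith [e1, e2, herase]
    rw [hcardHK]
    exact hfin
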